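/- arXiv:0904.0696 — 4 statements merged into one kernel-verified Lean document; each statement's English description precedes it below -/
import Mathlib

section
/- The limiting pressure of the Mallows model is p(β) = ∫_0^1 ln((1 − e^{−βx})/(βx)) dx; that is, lim_{n→∞} (1/n) ln([n]_{q_n}!/n!) = ∫_0^1 ln((1 − e^{−βx})/(βx)) dx where q_n = e^{−β/(n−1)} and β > 0. -/
/-!
Write `r(x) = (1 - e^{-x}) / x`. With `s = β / (n - 1)` and `q = e^{-s}`, the `i`-th factor of
`[n]_q! / n!` is `(q^i - 1) / ((q - 1) i) = r(i s) / r(s)`, so the pressure is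
`(1/n) ∑_{i ≤ n} log r(β i / (n - 1)) - log r(β / (n - 1))`. The first term is a Riemann sum of
`x ↦ log r(β x)` over `[0, 1]` (with one extra node just past `1`), the second tends to
`log r(0⁺) = 0`. Since `r` is a chord slope of the convex function `exp`, `log r` is antitone, and
Riemann sums of a monotone function are squeezed between integrals up to `O(1/n)`.
-/

open Filter Topology Real Set

section RiemannSum

lemma Finset.sum_Icc_one_eq_sum_range {M : Type*} [AddCommMonoid M] (g : ℕ → M) (m : ℕ) :
    ∑ i ∈ Finset.Icc 1 m, g i = ∑ i ∈ Finset.range m, g (i + 1) := by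
  rw [Finset.range_eq_Ico, Finset.sum_Ico_add', ← Finset.Ico_add_one_right_eq_Icc]

variable {f : ℝ → ℝ}

lemma integral_comp_div_natCast {m : ℕ} (hm : 0 < m) :
    ∫ x in (0 : ℝ)..0 + m, f (x / m) = m * ∫ x in (0 : ℝ)..1, f x := by
  have hm' : (m : ℝ) ≠ 0 := by positivity
  rw [intervalIntegral.integral_comp_div f hm', zero_add, zero_div, div_self hm', smul_eq_mul]

lemma AntitoneOn.comp_div_natCast (hf : AntitoneOn f (Icc 0 1)) {m : ℕ} (hm : 0 < m) :
    AntitoneOn (fun x => f (x / m)) (Icc 0 (0 + m)) := by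
  have hm' : (0 : ℝ) < m := by positivity
  have hmaps : ∀ x ∈ Icc (0 : ℝ) (0 + m), x / m ∈ Icc (0 : ℝ) 1 := fun x hx =>
    ⟨div_nonneg hx.1 hm'.le, (div_le_one hm').2 (by simpa using hx.2)⟩
  exact fun x hx y hy hxy => hf (hmaps x hx) (hmaps y hy) (by gcongr)

lemma AntitoneOn.sum_le_mul_integral (hf : AntitoneOn f (Icc 0 1)) {m : ℕ} (hm : 0 < m) :
    ∑ i ∈ Finset.Icc 1 m, f (i / m) ≤ m * ∫ x in (0 : ℝ)..1, f x := by
  have h := (hf.comp_div_natCast hm).sum_le_integral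
  rw [integral_comp_div_natCast hm] at h
  rw [Finset.sum_Icc_one_eq_sum_range (fun i => f (i / m))]
  simpa using h

lemma AntitoneOn.mul_integral_le_sum (hf : AntitoneOn f (Icc 0 1)) {m : ℕ} (hm : 0 < m) :
    m * ∫ x in (0 : ℝ)..1, f x ≤ ∑ i ∈ Finset.Icc 1 m, f (i / m) + (f 0 - f 1) := by
  have h := (hf.comp_div_natCast hm).integral_le_sum
  rw [integral_comp_div_natCast hm] at h
  have hm' : (m : ℝ) ≠ 0 := by positivity
  have hsplit := Finset.sum_range_succ' (fun i => f (i / m)) m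
  rw [Finset.sum_range_succ, ← Finset.sum_Icc_one_eq_sum_range (fun i => f (i / m))] at hsplit
  simp only [zero_add, div_self hm', Nat.cast_zero, zero_div] at h hsplit ⊢
  linarith

lemma AntitoneOn.tendsto_sum_div (hf : AntitoneOn f (Icc 0 1)) :
    Tendsto (fun m : ℕ => (∑ i ∈ Finset.Icc 1 m, f (i / m)) / m) atTop
      (𝓝 (∫ x in (0 : ℝ)..1, f x)) := by
  set I := ∫ x in (0 : ℝ)..1, f x
  have hlower : Tendsto (fun m : ℕ => I - (f 0 - f 1) / m) atTop (𝓝 I) := by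
    simpa using tendsto_const_nhds.sub (tendsto_const_div_atTop_nhds_zero_nat (f 0 - f 1))
  refine tendsto_of_tendsto_of_tendsto_of_le_of_le' hlower tendsto_const_nhds ?_ ?_
  all_goals
    filter_upwards [eventually_gt_atTop 0] with m hm
    have hm' : (0 : ℝ) < m := by positivity
  · rw [sub_le_iff_le_add, ← add_div, le_div_iff₀ hm', mul_comm]
    exact hf.mul_integral_le_sum hm
  · rw [div_le_iff₀ hm', mul_comm]
    exact hf.sum_le_mul_integral hm

lemma AntitoneOn.tendsto_sum_Icc_succ_div (hf : AntitoneOn f (Icc 0 1)) (hf1 : ContinuousAt f 1) :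
    Tendsto (fun m : ℕ => (∑ i ∈ Finset.Icc 1 (m + 1), f (i / m)) / (m + 1)) atTop
      (𝓝 (∫ x in (0 : ℝ)..1, f x)) := by
  have hlast : Tendsto (fun m : ℕ => f ((m + 1) / m)) atTop (𝓝 (f 1)) := by
    have h := (tendsto_one_div_atTop_nhds_zero_nat (𝕜 := ℝ)).const_add 1
    rw [add_zero] at h
    refine hf1.tendsto.comp (h.congr' ?_)
    filter_upwards [eventually_gt_atTop 0] with m hm
    field_simp
  have h := ((tendsto_natCast_div_add_atTop (1 : ℝ)).mul hf.tendsto_sum_div).add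
    (tendsto_one_div_add_atTop_nhds_zero_nat.mul hlast)
  rw [one_mul, zero_mul, add_zero] at h
  refine h.congr' ?_
  filter_upwards [eventually_gt_atTop 0] with m hm
  have hm' : (m : ℝ) ≠ 0 := by positivity
  rw [Finset.sum_Icc_succ_top (by omega)]
  push_cast
  field_simp

end RiemannSum

/-- The junk value `log (0 / 0) = 0` at `x = 0` is the limit of `log ((1 - e^{-x}) / x)`, so
this function is continuous on all of `ℝ`. -/
noncomputable def pressureIntegrand (x : ℝ) : ℝ := log ((1 - exp (-x)) / x)

lemma pressureIntegrand_zero : pressureIntegrand 0 = 0 := by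
  simp [pressureIntegrand]

lemma tendsto_one_sub_exp_neg_div_nhdsNE :
    Tendsto (fun x : ℝ => (1 - exp (-x)) / x) (𝓝[≠] 0) (𝓝 1) := by
  have h : HasDerivAt (fun x : ℝ => 1 - exp (-x)) 1 0 := by
    simpa using ((hasDerivAt_neg (0 : ℝ)).exp).const_sub 1
  exact h.tendsto_slope.congr fun x => by simp [slope_def_field]

lemma continuous_pressureIntegrand : Continuous pressureIntegrand := by
  refine continuous_iff_continuousAt.2 fun x => ?_
  rcases eq_or_ne x 0 with rfl | hx
  · rw [← continuousWithinAt_compl_self, ContinuousWithinAt, pressureIntegrand_zero]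
    have h := (continuousAt_log one_ne_zero).tendsto.comp tendsto_one_sub_exp_neg_div_nhdsNE
    rwa [log_one] at h
  · have hr : (1 - exp (-x)) / x ≠ 0 :=
      div_ne_zero (sub_ne_zero.2 (by rw [Ne, eq_comm, exp_eq_one_iff, neg_eq_zero]; exact hx)) hx
    exact ((continuousAt_const.sub (continuous_exp.comp continuous_neg).continuousAt).div
      continuousAt_id hx).log hr

lemma one_sub_exp_neg_div_pos {x : ℝ} (hx : 0 < x) : 0 < (1 - exp (-x)) / x :=
  div_pos (sub_pos.2 (exp_lt_one_iff.2 (neg_lt_zero.2 hx))) hx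

lemma antitoneOn_pressureIntegrand : AntitoneOn pressureIntegrand (Ici 0) := by
  intro x hx y hy hxy
  rcases (mem_Ici.1 hx).eq_or_lt with rfl | hx0
  · have h1 : (1 - exp (-y)) / y ≤ 1 := div_le_one_of_le₀ (by linarith [add_one_le_exp (-y)]) hxy
    simpa [pressureIntegrand] using log_nonpos (div_nonneg (by simpa using hxy) hxy) h1
  · have hy0 := hx0.trans_le hxy
    have hslope := convexOn_exp.secant_mono (mem_univ 0) (mem_univ (-y)) (mem_univ (-x))
      (by linarith) (by linarith) (neg_le_neg hxy)
    refine log_le_log (one_sub_exp_neg_div_pos hy0) ?_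
    rw [← neg_div_neg_eq (1 - _) y, ← neg_div_neg_eq (1 - _) x, neg_sub, neg_sub]
    simpa using hslope

lemma log_qFactorial_div_factorial {s : ℝ} (hs : 0 < s) (n : ℕ) :
    log ((∏ i ∈ Finset.Icc 1 n, (exp (-s) ^ i - 1) / (exp (-s) - 1)) / n.factorial) =
      ∑ i ∈ Finset.Icc 1 n, pressureIntegrand (i * s) - n * pressureIntegrand s := by
  have hq : exp (-s) < 1 := exp_lt_one_iff.2 (neg_lt_zero.2 hs)
  have hq₁ : exp (-s) - 1 ≠ 0 := (sub_neg.2 hq).ne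
  have hq₂ : 1 - exp (-s) ≠ 0 := (sub_pos.2 hq).ne'
  have hfactor : ∀ i ∈ Finset.Icc 1 n, (exp (-s) ^ i - 1) / (exp (-s) - 1) / i =
      (1 - exp (-(i * s))) / (i * s) / ((1 - exp (-s)) / s) := by
    intro i hi
    have hi : (i : ℝ) ≠ 0 := by have := (Finset.mem_Icc.1 hi).1; positivity
    rw [← exp_nat_mul, mul_neg]
    field_simp
    ring
  have hfact : (n.factorial : ℝ) = ∏ i ∈ Finset.Icc 1 n, (i : ℝ) := by
    rw [← Finset.prod_Ico_id_eq_factorial, Nat.cast_prod, Finset.Ico_add_one_right_eq_Icc]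
  have hpos : ∀ i ∈ Finset.Icc 1 n, 0 < (1 - exp (-(i * s))) / (i * s) := fun i hi =>
    one_sub_exp_neg_div_pos (mul_pos (by exact_mod_cast (Finset.mem_Icc.1 hi).1) hs)
  rw [hfact, ← Finset.prod_div_distrib, Finset.prod_congr rfl hfactor,
    log_prod fun i hi => (div_pos (hpos i hi) (one_sub_exp_neg_div_pos hs)).ne',
    Finset.sum_congr rfl fun i hi => log_div (hpos i hi).ne' (one_sub_exp_neg_div_pos hs).ne',
    Finset.sum_sub_distrib, Finset.sum_const, Nat.card_Icc, add_tsub_cancel_right, nsmul_eq_mul]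
  rfl

/-- The limiting pressure of the Mallows model:
`lim_n (1/n) ln([n]_{q_n}!/n!) = ∫_0^1 ln((1-e^{-βx})/(βx)) dx`
with `q_n = e^{-β/(n-1)}`. -/
theorem mallows_pressure_limit (β : ℝ) (hβ : 0 < β) :
    Tendsto (fun n : ℕ =>
        (1 / (n : ℝ)) * Real.log
          ((∏ i ∈ Finset.Icc 1 n,
            ((Real.exp (-β / ((n : ℝ) - 1))) ^ i - 1)
              / (Real.exp (-β / ((n : ℝ) - 1)) - 1)) / (Nat.factorial n : ℝ)))
      atTop
      (nhds (∫ x in (0:ℝ)..1, Real.log ((1 - Real.exp (-β * x)) / (β * x)))) := by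
  set g : ℝ → ℝ := fun x => pressureIntegrand (β * x)
  have hg : AntitoneOn g (Icc 0 1) := fun x hx y hy hxy =>
    antitoneOn_pressureIntegrand (mul_nonneg hβ.le hx.1) (mul_nonneg hβ.le hy.1) (by gcongr)
  have hriemann := hg.tendsto_sum_Icc_succ_div
    (continuous_pressureIntegrand.comp (continuous_const_mul β)).continuousAt
  have hcorrection : Tendsto (fun m : ℕ => pressureIntegrand (β / m)) atTop (𝓝 0) := by
    have h := (continuous_pressureIntegrand.tendsto 0).comp (tendsto_const_div_atTop_nhds_zero_nat β)
    rwa [pressureIntegrand_zero] at h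
  have hintegrand : (fun x => log ((1 - exp (-β * x)) / (β * x))) = g := by
    funext x
    simp only [g, pressureIntegrand, neg_mul]
  rw [← tendsto_add_atTop_iff_nat 1, hintegrand, ← sub_zero (∫ x in (0 : ℝ)..1, g x)]
  refine (hriemann.sub hcorrection).congr' ?_
  filter_upwards [eventually_gt_atTop 0] with m hm
  have hm' : (0 : ℝ) < m := by positivity
  push_cast
  rw [add_sub_cancel_right, neg_div, log_qFactorial_div_factorial (div_pos hβ hm')]
  simp only [g, mul_div_assoc', div_mul_eq_mul_div, mul_comm _ β]
  field_simp
  push_cast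
  ring
end

section
/- If β ≤ 0 or L₁L₂ < 1/β, then u(x,y) = (1 − βxy)^{−2} satisfies the integral equation ln u(x,y) = 2β ∫_0^x ∫_0^y u(x′,y′) dy′ dx′ for all (x,y) ∈ [0,L₁]×[0,L₂]. -/
open Set intervalIntegral

/-! Both integrations are explicit: for fixed `x'`, `y' ↦ y' / (1 - βx'y')` is an antiderivative
of `(1 - βx'y')⁻²`, and then `x' ↦ -log (1 - βx'y)` is an antiderivative of `βy / (1 - βx'y)`;
the condition on `β` keeps `1 - βx'y'` away from `0` on the rectangle. -/

lemma one_sub_mul_pos_of_le {β p P : ℝ} (hp : 0 ≤ p) (hpP : p ≤ P) (h : β ≤ 0 ∨ P < 1 / β) :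
    0 < 1 - β * p := by
  rcases le_or_gt β 0 with hβ | hβ
  · nlinarith
  · have hP : P < 1 / β := h.resolve_left hβ.not_ge
    have : β * p < 1 :=
      calc β * p ≤ β * P := by gcongr
        _ < β * (1 / β) := by gcongr
        _ = 1 := mul_one_div_cancel hβ.ne'
    linarith

lemma hasDerivAt_div_one_sub_mul {c t : ℝ} (ht : 1 - c * t ≠ 0) :
    HasDerivAt (fun s => s / (1 - c * s)) ((1 - c * t) ^ (-2 : ℤ)) t := by
  refine ((hasDerivAt_id t).div (((hasDerivAt_id t).const_mul c).const_sub 1) ht).congr_deriv ?_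
  simp only [id, zpow_neg, zpow_two]
  field_simp
  ring

lemma integral_one_sub_mul_zpow_neg_two {c y : ℝ} (h : ∀ t ∈ uIcc 0 y, 1 - c * t ≠ 0) :
    ∫ t in (0 : ℝ)..y, (1 - c * t) ^ (-2 : ℤ) = y / (1 - c * y) := by
  have hcont : ContinuousOn (fun t => (1 - c * t) ^ (-2 : ℤ)) (uIcc 0 y) :=
    (continuousOn_const.sub (continuousOn_const.mul continuousOn_id)).zpow₀ _
      fun t ht => Or.inl (h t ht)
  simpa using integral_eq_sub_of_hasDerivAt (fun t ht => hasDerivAt_div_one_sub_mul (h t ht))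
    hcont.intervalIntegrable

lemma hasDerivAt_neg_log_one_sub_mul {c t : ℝ} (ht : 1 - c * t ≠ 0) :
    HasDerivAt (fun s => -Real.log (1 - c * s)) (c / (1 - c * t)) t := by
  refine ((((hasDerivAt_id t).const_mul c).const_sub 1).log ht).neg.congr_deriv ?_
  simp only [id]
  field_simp

lemma integral_div_one_sub_mul {c x : ℝ} (h : ∀ t ∈ uIcc 0 x, 1 - c * t ≠ 0) :
    ∫ t in (0 : ℝ)..x, c / (1 - c * t) = -Real.log (1 - c * x) := by
  have hcont : ContinuousOn (fun t => c / (1 - c * t)) (uIcc 0 x) :=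
    continuousOn_const.div (continuousOn_const.sub (continuousOn_const.mul continuousOn_id)) h
  simpa using integral_eq_sub_of_hasDerivAt (fun t ht => hasDerivAt_neg_log_one_sub_mul (h t ht))
    hcont.intervalIntegrable

theorem liouville_integral_solution_general (β L₁ L₂ : ℝ)
    (h : β ≤ 0 ∨ L₁ * L₂ < 1 / β) :
    ∀ x ∈ Icc 0 L₁, ∀ y ∈ Icc 0 L₂,
      Real.log ((1 - β * x * y) ^ (-2 : ℤ))
        = 2 * β * ∫ x' in (0:ℝ)..x, ∫ y' in (0:ℝ)..y,
            (1 - β * x' * y') ^ (-2 : ℤ) := by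
  intro x hx y hy
  have hpos : ∀ a ∈ uIcc 0 x, ∀ b ∈ uIcc 0 y, 0 < 1 - β * a * b := by
    intro a ha b hb
    rw [uIcc_of_le hx.1] at ha
    rw [uIcc_of_le hy.1] at hb
    rw [mul_assoc]
    exact one_sub_mul_pos_of_le (mul_nonneg ha.1 hb.1)
      (mul_le_mul (ha.2.trans hx.2) (hb.2.trans hy.2) hb.1 (ha.1.trans (ha.2.trans hx.2))) h
  have hinner : EqOn (fun a => ∫ b in (0 : ℝ)..y, (1 - β * a * b) ^ (-2 : ℤ))
      (fun a => y / (1 - β * a * y)) (uIcc 0 x) :=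
    fun a ha => integral_one_sub_mul_zpow_neg_two fun b hb => (hpos a ha b hb).ne'
  have houter : ∫ a in (0 : ℝ)..x, β * y / (1 - β * y * a) = -Real.log (1 - β * y * x) :=
    integral_div_one_sub_mul fun a ha => by
      rw [mul_right_comm]
      exact (hpos a ha y right_mem_uIcc).ne'
  calc Real.log ((1 - β * x * y) ^ (-2 : ℤ)) = 2 * -Real.log (1 - β * y * x) := by
        rw [Real.log_zpow, mul_right_comm]
        push_cast
        ring
    _ = 2 * β * ∫ a in (0 : ℝ)..x, y / (1 - β * a * y) := by
        rw [← houter, mul_assoc, ← integral_const_mul β]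
        congr 1
        apply integral_congr
        intro a _
        simp only [mul_div_assoc, mul_right_comm β a y]
    _ = _ := by rw [integral_congr hinner]

/-- If `β ≤ 0` or `L₁L₂ < 1/β`, then `u(x,y) = (1-βxy)^{-2}` satisfies the
Liouville Cauchy integral equation on `[0,L₁]×[0,L₂]`. -/
theorem liouville_integral_solution (β L₁ L₂ : ℝ) (hL₁ : 0 < L₁) (hL₂ : 0 < L₂)
    (h : β ≤ 0 ∨ L₁ * L₂ < 1 / β) :
    ∀ x ∈ Icc 0 L₁, ∀ y ∈ Icc 0 L₂,
      Real.log ((1 - β * x * y) ^ (-2 : ℤ))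
        = 2 * β * ∫ x' in (0:ℝ)..x, ∫ y' in (0:ℝ)..y,
            (1 - β * x' * y') ^ (-2 : ℤ) :=
  liouville_integral_solution_general β L₁ L₂ h
end

section
/- For β ≠ 0, the function u(x,y) = αφ(x)ψ(y)/(α − βΦ(x)Ψ(y))², with φ(z) = ψ(z) = βe^{−βz}/(1 − e^{−β}), Φ(z) = Ψ(z) = (1 − e^{−βz})/(1 − e^{−β}), α = β/(1 − e^{−β}), equals (β/2)sinh(β/2) / (e^{β/4} cosh(β(x−y)/2) − e^{−β/4} cosh(β(x+y−1)/2))² for all (x,y) ∈ [0,1]². -/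
noncomputable def phi (β z : ℝ) : ℝ := β * Real.exp (-β * z) / (1 - Real.exp (-β))

noncomputable def Phi (β z : ℝ) : ℝ := (1 - Real.exp (-β * z)) / (1 - Real.exp (-β))

noncomputable def alpha (β : ℝ) : ℝ := β / (1 - Real.exp (-β))

/-!
Write `q = e^{-β}`, `a = e^{-βx}`, `b = e^{-βy}` and `N = (1 - q) - (1 - a)(1 - b)`. Clearing the
factors `1 - q`, the left side is `β (1 - q) a b / N²`. Expanding the hyperbolic functions into
exponentials, the denominator on the right is `e^{β(x+y)/2 + β/4} N / 2` and the numerator is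
`(β/4) e^{β/2} (1 - q)`; since `e^{β(x+y) + β/2} a b = e^{β/2}`, this is the same quotient.
-/

open Real

noncomputable def mallowsDenom (β x y : ℝ) : ℝ :=
  (1 - exp (-β)) - (1 - exp (-β * x)) * (1 - exp (-β * y))

theorem alpha_sub_mul_Phi_mul_Phi {β : ℝ} (hq : 1 - exp (-β) ≠ 0) (x y : ℝ) :
    alpha β - β * Phi β x * Phi β y = β * mallowsDenom β x y / (1 - exp (-β)) ^ 2 := by
  unfold alpha Phi mallowsDenom
  field_simp

theorem alpha_mul_phi_mul_phi_div (β x y : ℝ) :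
    alpha β * phi β x * phi β y / (alpha β - β * Phi β x * Phi β y) ^ 2
      = β * (1 - exp (-β)) * exp (-β * x) * exp (-β * y) / mallowsDenom β x y ^ 2 := by
  by_cases hq : 1 - exp (-β) = 0
  · simp [alpha, hq]
  rw [alpha_sub_mul_Phi_mul_Phi hq]
  unfold alpha phi
  field_simp

theorem exp_mul_cosh_sub_exp_mul_cosh (β x y : ℝ) :
    exp (β / 4) * cosh (β * (x - y) / 2) - exp (-β / 4) * cosh (β * (x + y - 1) / 2)
      = exp (β * (x + y) / 2 + β / 4) / 2 * mallowsDenom β x y := by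
  simp only [cosh_eq, mallowsDenom]
  ring_nf
  simp only [← exp_add]
  ring_nf

theorem half_mul_sinh_half (β : ℝ) :
    β / 2 * sinh (β / 2) = β / 4 * exp (β / 2) * (1 - exp (-β)) := by
  have h : exp (β / 2) * exp (-β) = exp (-(β / 2)) := by rw [← exp_add]; ring_nf
  rw [sinh_eq]
  linear_combination β / 4 * h

theorem mallows_density_formula_general (β : ℝ) :
    ∀ x ∈ Set.Icc (0:ℝ) 1, ∀ y ∈ Set.Icc (0:ℝ) 1,
      alpha β * phi β x * phi β y / (alpha β - β * Phi β x * Phi β y) ^ 2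
        = (β / 2) * Real.sinh (β / 2) /
            (Real.exp (β / 4) * Real.cosh (β * (x - y) / 2)
              - Real.exp (-β / 4) * Real.cosh (β * (x + y - 1) / 2)) ^ 2 := by
  intro x _ y _
  have hE : exp (β * (x + y) / 2 + β / 4) ^ 2 * exp (-β * x) * exp (-β * y) = exp (β / 2) := by
    rw [← exp_nat_mul, ← exp_add, ← exp_add]; ring_nf
  rw [alpha_mul_phi_mul_phi_div, exp_mul_cosh_sub_exp_mul_cosh, half_mul_sinh_half, ← hE]
  field_simp
  norm_num

/-- The explicit solution in the `α, φ, ψ, Φ, Ψ` form equals the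
closed `sinh`/`cosh` formula on the unit square. -/
theorem mallows_density_formula (β : ℝ) (hβ : β ≠ 0) :
    ∀ x ∈ Set.Icc (0:ℝ) 1, ∀ y ∈ Set.Icc (0:ℝ) 1,
      alpha β * phi β x * phi β y / (alpha β - β * Phi β x * Phi β y) ^ 2
        = (β / 2) * Real.sinh (β / 2) /
            (Real.exp (β / 4) * Real.cosh (β * (x - y) / 2)
              - Real.exp (-β / 4) * Real.cosh (β * (x + y - 1) / 2)) ^ 2 :=
  mallows_density_formula_general β
end

section
/- Sharp interface limit: for fixed 0 < y < 1 and t ∈ ℝ, with x = x(β) = y + t/β, the density profile ρ(x;y) = (1 − e^{−βy})e^{−βx} / ((1 − e^{−β}) − (1 − e^{−βx})(1 − e^{−βy})) converges to 1/(1 + e^t) as β → ∞. -/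
open Filter Topology Real

/-!
Factoring `e^{-βy}` out of numerator and denominator rewrites the profile as
`(1 - a) s / (1 + s - a s - b)` with `a = e^{-βy}`, `b = e^{-β(1-y)}` and `s = e^{-β(x-y)}`.
Along `x = y + t/β` we have `s = e^{-t}`, while `a, b → 0` because `0 < y < 1`;
the limit is therefore `e^{-t} / (1 + e^{-t}) = 1 / (1 + e^t)`.
-/

/-- The profile `ρ(x; y)`, with the asymmetry parameter `β` made explicit. -/
noncomputable def blockingDensity (β x y : ℝ) : ℝ :=
  (1 - exp (-β * y)) * exp (-β * x) /
    ((1 - exp (-β)) - (1 - exp (-β * x)) * (1 - exp (-β * y)))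

lemma div_factor_eq (a b s : ℝ) (ha : a ≠ 0) :
    (1 - a) * (a * s) / ((1 - a * b) - (1 - a * s) * (1 - a)) =
      (1 - a) * s / (1 + s - a * s - b) := by
  have hden : (1 - a * b) - (1 - a * s) * (1 - a) = a * (1 + s - a * s - b) := by ring
  rw [hden, mul_left_comm, mul_div_mul_left _ _ ha]

lemma blockingDensity_eq (β x y : ℝ) :
    blockingDensity β x y =
      (1 - exp (-β * y)) * exp (-β * (x - y)) /
        (1 + exp (-β * (x - y)) - exp (-β * y) * exp (-β * (x - y)) - exp (-β * (1 - y))) := by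
  have hx : exp (-β * x) = exp (-β * y) * exp (-β * (x - y)) := by
    rw [← exp_add]; ring_nf
  have h1 : exp (-β) = exp (-β * y) * exp (-β * (1 - y)) := by
    rw [← exp_add]; ring_nf
  rw [blockingDensity, hx, h1, div_factor_eq _ _ _ (exp_pos _).ne']

lemma tendsto_exp_neg_mul_atTop {c : ℝ} (hc : 0 < c) :
    Tendsto (fun β : ℝ => exp (-β * c)) atTop (𝓝 0) := by
  simp only [neg_mul]
  exact tendsto_exp_neg_atTop_nhds_zero.comp (tendsto_id.atTop_mul_const hc)

lemma tendsto_factored_density {α : Type*} {l : Filter α} {a b : α → ℝ} {s : ℝ}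
    (ha : Tendsto a l (𝓝 0)) (hb : Tendsto b l (𝓝 0)) (hs : 1 + s ≠ 0) :
    Tendsto (fun i => (1 - a i) * s / (1 + s - a i * s - b i)) l (𝓝 (s / (1 + s))) := by
  have hnum : Tendsto (fun i => (1 - a i) * s) l (𝓝 s) := by
    simpa using (ha.const_sub 1).mul_const s
  have hden : Tendsto (fun i => 1 + s - a i * s - b i) l (𝓝 (1 + s)) := by
    simpa using ((ha.mul_const s).const_sub (1 + s)).sub hb
  exact hnum.div hden hs

lemma exp_neg_div_one_add_exp_neg (t : ℝ) : exp (-t) / (1 + exp (-t)) = 1 / (1 + exp t) := by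
  rw [exp_neg]
  field_simp
  ring

/-- Sharp interface limit: along `x = y + t/β` the blocking-measure density
profile converges to the Fermi profile `1/(1+e^t)` as `β → ∞`. -/
theorem sharp_interface_limit (y t : ℝ) (hy : 0 < y) (hy1 : y < 1) :
    Tendsto (fun β : ℝ =>
        (1 - Real.exp (-β * y)) * Real.exp (-β * (y + t / β)) /
          ((1 - Real.exp (-β))
            - (1 - Real.exp (-β * (y + t / β))) * (1 - Real.exp (-β * y))))
      atTop (nhds (1 / (1 + Real.exp t))) := by
  rw [← exp_neg_div_one_add_exp_neg]
  refine (tendsto_factored_density (tendsto_exp_neg_mul_atTop hy)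
    (tendsto_exp_neg_mul_atTop (sub_pos.2 hy1)) (by positivity)).congr' ?_
  filter_upwards [eventually_ne_atTop 0] with β hβ
  have hshift : -β * (y + t / β - y) = -t := by field_simp; ring
  rw [← blockingDensity, blockingDensity_eq, hshift]
end
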